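/- Let 0 < α < n, 0 < p ≤ 1, N = ⌊n(1/p−1)⌋+1, 1/q = 1/p − α/n, q̃ = q(n+N)/n and 1/p̃ = 1/q̃ + α/(n+N). Then p̃ > 1, q̃ > 1, p̃/q̃ = p/q, and for any discrete cube Q ⊂ ℤⁿ, Σ_{j∈ℤⁿ} [M_{αn/(n+N)}(χ_Q)(j)]^{q̃} ≤ C(#Q)^{q/p}, with C independent of Q. -/

import Mathlib

open scoped BigOperators ENNReal

noncomputable section

/-- Euclidean norm of an integer vector in `ℤⁿ`. -/
def znorm {n : ℕ} (j : Fin n → ℤ) : ℝ := Real.sqrt (∑ l, ((j l : ℝ)) ^ 2)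

/-- `ℓ^∞` norm of an integer vector, as a natural number. -/
def zinf {n : ℕ} (j : Fin n → ℤ) : ℕ := Finset.univ.sup fun l => (j l).natAbs

/-- The discrete cube centered at `k0` with "radius" `m` (side length `2m+1`),
i.e. `{i : |i - k0|_∞ ≤ m}`. -/
def dcube {n : ℕ} (k0 : Fin n → ℤ) (m : ℕ) : Finset (Fin n → ℤ) :=
  Finset.Icc (fun l => k0 l - m) (fun l => k0 l + m)

/-- The discrete Riesz potential `(I_α b)(j) = ∑_{i ≠ j} b(i) |i-j|^{α-n}`. -/
def rieszPot {n : ℕ} (α : ℝ) (b : (Fin n → ℤ) → ℝ) (j : Fin n → ℤ) : ℝ :=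
  ∑' i : {i : Fin n → ℤ // i ≠ j}, b i.1 * znorm (i.1 - j) ^ (α - n)

/-- Embedding of `ℤⁿ` into Euclidean space `ℝⁿ`. -/
def toE {n : ℕ} (j : Fin n → ℤ) : EuclideanSpace ℝ (Fin n) := WithLp.toLp 2 (fun l => (j l : ℝ))

/-- The discretized dilation `Φ_t^d(j) = t^{-n} Φ(j/t)` for `j ≠ 0`, and `Φ_t^d(0) = 0`. -/
def phid {n : ℕ} (Φ : SchwartzMap (EuclideanSpace ℝ (Fin n)) ℝ) (t : ℝ) (j : Fin n → ℤ) : ℝ :=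
  if j = 0 then 0 else t ^ (-(n : ℝ)) * Φ (t⁻¹ • toE j)

/-- Discrete convolution `(b ∗ c)(j) = ∑_i b(i) c(j-i)`. -/
def dconv {n : ℕ} (b c : (Fin n → ℤ) → ℝ) (j : Fin n → ℤ) : ℝ :=
  ∑' i : Fin n → ℤ, b i * c (j - i)

/-- The maximal function `sup_{t>0} |(Φ_t^d ∗ b)(j)|`, valued in `ℝ≥0∞`. -/
def maxFn {n : ℕ} (Φ : SchwartzMap (EuclideanSpace ℝ (Fin n)) ℝ) (b : (Fin n → ℤ) → ℝ)
    (j : Fin n → ℤ) : ℝ≥0∞ :=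
  ⨆ (t : ℝ) (_ : 0 < t), ENNReal.ofReal |dconv (phid Φ t) b j|

/-- The `ℓ^p` quasinorm (`0 < p < ∞`) of a real sequence on `ℤⁿ`, valued in `ℝ≥0∞`. -/
def elp {n : ℕ} (p : ℝ) (f : (Fin n → ℤ) → ℝ) : ℝ≥0∞ :=
  (∑' j : Fin n → ℤ, ENNReal.ofReal |f j| ^ p) ^ (1 / p)

/-- The `ℓ^p` quasinorm of an `ℝ≥0∞`-valued sequence on `ℤⁿ`. -/
def elpE {n : ℕ} (p : ℝ) (f : (Fin n → ℤ) → ℝ≥0∞) : ℝ≥0∞ :=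
  (∑' j : Fin n → ℤ, f j ^ p) ^ (1 / p)

/-- The discrete Hardy space quasinorm `‖b‖_{H^p} = ‖b‖_{ℓ^p} + ‖sup_{t>0}|Φ_t^d ∗ b|‖_{ℓ^p}`. -/
def hpNorm {n : ℕ} (Φ : SchwartzMap (EuclideanSpace ℝ (Fin n)) ℝ) (p : ℝ)
    (b : (Fin n → ℤ) → ℝ) : ℝ≥0∞ :=
  elp p b + elpE p (maxFn Φ b)

/-- A `(p, ∞, N)`-atom supported in the discrete cube `dcube k0 m`. -/
def IsDiscreteAtom {n : ℕ} (p : ℝ) (N : ℕ) (k0 : Fin n → ℤ) (m : ℕ)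
    (a : (Fin n → ℤ) → ℝ) : Prop :=
  (∀ j, j ∉ dcube k0 m → a j = 0) ∧
  (∀ j, |a j| ≤ ((dcube k0 m).card : ℝ) ^ (-(1 / p))) ∧
  (∀ β : Fin n → ℕ, (∑ l, β l) ≤ N →
    ∑ j ∈ dcube k0 m, (∏ l, ((j l : ℝ)) ^ β l) * a j = 0)

/-- The centered discrete fractional maximal operator
`(M_α b)(j) = sup_m (#Q_{j,m})^{α/n - 1} ∑_{i ∈ Q_{j,m}} |b(i)|`. -/
def fracMax {n : ℕ} (α : ℝ) (b : (Fin n → ℤ) → ℝ) (j : Fin n → ℤ) : ℝ≥0∞ :=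
  ⨆ m : ℕ, ENNReal.ofReal
    ((((dcube j m).card : ℝ) ^ (α / n - 1)) * ∑ i ∈ dcube j m, |b i|)

/-- The Taylor polynomial of degree `N - 1` of `f` centered at `c`, evaluated at `x`. -/
def taylorPoly {n : ℕ} (f : EuclideanSpace ℝ (Fin n) → ℝ) (c x : EuclideanSpace ℝ (Fin n))
    (N : ℕ) : ℝ :=
  ∑ r ∈ Finset.range N, (1 / r.factorial : ℝ) * iteratedFDeriv ℝ r f c (fun _ => x - c)

/-!
The cube `dcube k0 m`, of side `b = 2m+1`, is a product of intervals, and so is its intersection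
with any cube centered at `j`. Coordinatewise this gives
`M_δ χ_Q(j) ≤ ∏ₗ b · max(b, |jₗ - k0ₗ|)^(δ/n - 1)`, so `∑ⱼ (M_δ χ_Q(j))^t` is at most the `n`-th
power of `∑_{d ∈ ℤ} b^t · max(b, |d|)^(-s)` with `s = (1 - δ/n) t`. For `s > 1`, cutting `ℕ` into
blocks of length `b` bounds this one-dimensional sum by `O(b^(t + 1 - s))`, and with `#Q = bⁿ` the
total is `O(#Q^(1 + δt/n))`. For the exponents of the theorem `δ/n = α/(n+N)`, `1 + δq̃/n = q/p`,
and `s > 1` is exactly `N > n(1/p - 1)`.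
-/

open Finset

lemma dcube_eq_piFinset {n : ℕ} (k : Fin n → ℤ) (m : ℕ) :
    dcube k m = Fintype.piFinset fun l => Icc (k l - m) (k l + m) :=
  Pi.Icc_eq _ _

lemma card_Icc_sub_add (c : ℤ) (r : ℕ) : #(Icc (c - r) (c + r)) = 2 * r + 1 := by
  rw [Int.card_Icc]; omega

lemma card_dcube {n : ℕ} (k : Fin n → ℤ) (m : ℕ) : #(dcube k m) = (2 * m + 1) ^ n := by
  simp only [dcube_eq_piFinset, Fintype.card_piFinset, card_Icc_sub_add, prod_const, card_univ,
    Fintype.card_fin]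

lemma card_dcube_inter_dcube {n : ℕ} (j k : Fin n → ℤ) (r m : ℕ) :
    #(dcube j r ∩ dcube k m) = ∏ l, #(Icc (j l - r) (j l + r) ∩ Icc (k l - m) (k l + m)) := by
  rw [dcube_eq_piFinset, dcube_eq_piFinset, ← Fintype.piFinset_inter, Fintype.card_piFinset]

lemma rpow_sub_one_mul_le_mul_rpow_sub_one {a b R X γ : ℝ} (hγ0 : 0 ≤ γ) (hγ1 : γ ≤ 1)
    (ha : 0 < a) (hb : 0 < b) (hX0 : 0 ≤ X) (hXa : X ≤ a) (hXb : X ≤ b)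
    (hbR : b ≤ R) (hR : R ≤ max a b) :
    a ^ (γ - 1) * X ≤ b * R ^ (γ - 1) := by
  rcases le_or_gt b a with hba | hab
  · have hRa : R ≤ a := hR.trans (max_le le_rfl hba)
    rw [mul_comm b]
    exact mul_le_mul (Real.rpow_le_rpow_of_nonpos (hb.trans_le hbR) hRa (by linarith))
      hXb hX0 (Real.rpow_nonneg (hb.le.trans hbR) _)
  · have hRb : R = b := le_antisymm (hR.trans (max_le hab.le le_rfl)) hbR
    calc a ^ (γ - 1) * X ≤ a ^ (γ - 1) * a := by gcongr
      _ = a ^ γ := by rw [← Real.rpow_add_one ha.ne', sub_add_cancel]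
      _ ≤ b ^ γ := by gcongr
      _ = b * R ^ (γ - 1) := by rw [hRb, mul_comm, ← Real.rpow_add_one hb.ne', sub_add_cancel]

lemma rpow_sub_one_mul_card_Icc_inter_Icc_le {γ : ℝ} (hγ0 : 0 ≤ γ) (hγ1 : γ ≤ 1)
    (c k : ℤ) (r m : ℕ) :
    (2 * r + 1 : ℝ) ^ (γ - 1) * #(Icc (c - r) (c + r) ∩ Icc (k - m) (k + m))
      ≤ (2 * m + 1) * max (2 * m + 1 : ℝ) |((c - k : ℤ) : ℝ)| ^ (γ - 1) := by
  set X := #(Icc (c - r) (c + r) ∩ Icc (k - m) (k + m))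
  rcases Nat.eq_zero_or_pos X with hX | hX
  · rw [hX, Nat.cast_zero, mul_zero]
    positivity
  obtain ⟨i, hi⟩ := card_pos.mp hX
  simp only [mem_inter, mem_Icc] at hi
  have hXr : X ≤ 2 * r + 1 := card_Icc_sub_add c r ▸ card_le_card inter_subset_left
  have hXm : X ≤ 2 * m + 1 := card_Icc_sub_add k m ▸ card_le_card inter_subset_right
  have hck : |((c - k : ℤ) : ℝ)| ≤ r + m := by
    rw [← Int.cast_abs]
    exact_mod_cast abs_le.mpr ⟨by omega, by omega⟩
  refine rpow_sub_one_mul_le_mul_rpow_sub_one hγ0 hγ1 (by positivity) (by positivity)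
    (by positivity) (by exact_mod_cast hXr) (by exact_mod_cast hXm) (le_max_left _ _)
    (max_le (le_max_right _ _) (hck.trans ?_))
  rcases le_total (r : ℝ) m with h | h
  · exact le_max_of_le_right (by linarith)
  · exact le_max_of_le_left (by linarith)

lemma fracMax_indicator_dcube_le {n : ℕ} {δ : ℝ} (hδ0 : 0 ≤ δ) (hδn : δ ≤ n)
    (k0 : Fin n → ℤ) (m : ℕ) (j : Fin n → ℤ) :
    fracMax δ (fun i => if i ∈ dcube k0 m then (1 : ℝ) else 0) j ≤
      ENNReal.ofReal
        (∏ l, (2 * m + 1) * max (2 * m + 1 : ℝ) |((j l - k0 l : ℤ) : ℝ)| ^ (δ / n - 1)) := by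
  have hγ0 : 0 ≤ δ / n := div_nonneg hδ0 n.cast_nonneg
  have hγ1 : δ / n ≤ 1 := div_le_one_of_le₀ hδn n.cast_nonneg
  refine iSup_le fun r => ENNReal.ofReal_le_ofReal ?_
  have hsum : ∑ i ∈ dcube j r, |if i ∈ dcube k0 m then (1 : ℝ) else 0|
      = #(dcube j r ∩ dcube k0 m) := by
    simp [apply_ite]
  rw [hsum, card_dcube_inter_dcube, card_dcube]
  simp only [Nat.cast_prod, Nat.cast_pow, Nat.cast_add, Nat.cast_mul, Nat.cast_ofNat, Nat.cast_one]
  rw [← Real.rpow_pow_comm (by positivity), ← Fin.prod_const, ← prod_mul_distrib]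
  exact prod_le_prod (fun l _ => by positivity) fun l _ =>
    rpow_sub_one_mul_card_Icc_inter_Icc_le hγ0 hγ1 _ _ r m

lemma tsum_pi_prod_le_prod_tsum {ι α : Type*} [Fintype ι] (g : ι → α → ℝ≥0∞) :
    ∑' v : ι → α, ∏ i, g i (v i) ≤ ∏ i, ∑' a, g i a := by
  classical
  refine ENNReal.summable.tsum_le_of_sum_le fun s => ?_
  calc ∑ v ∈ s, ∏ i, g i (v i)
      ≤ ∑ v ∈ Fintype.piFinset fun i => s.image (· i), ∏ i, g i (v i) :=
        sum_le_sum_of_subset fun v hv => Fintype.mem_piFinset.mpr fun i => mem_image_of_mem _ hv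
    _ = ∏ i, ∑ a ∈ s.image (· i), g i a := (prod_univ_sum _ _).symm
    _ ≤ ∏ i, ∑' a, g i a := prod_le_prod' fun i _ => ENNReal.sum_le_tsum _

lemma tsum_int_natAbs_le (h : ℕ → ℝ≥0∞) : ∑' d : ℤ, h d.natAbs ≤ 2 * ∑' k, h k := by
  rw [tsum_of_nat_of_neg_add_one ENNReal.summable ENNReal.summable, two_mul]
  have hneg (k : ℕ) : (-((k : ℤ) + 1)).natAbs = k + 1 := by omega
  simp only [Int.natAbs_natCast, hneg]
  exact add_le_add le_rfl (ENNReal.tsum_comp_le_tsum_of_injective (add_left_injective 1) h)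

lemma tsum_nat_max_rpow_neg_le {s : ℝ} (hs : 0 ≤ s) (b : ℕ) [NeZero b] :
    ∑' k : ℕ, ENNReal.ofReal (max (b : ℝ) k ^ (-s)) ≤
      ENNReal.ofReal ((b : ℝ) ^ (1 - s)) * ∑' w : ℕ, ENNReal.ofReal (max 1 (w : ℝ) ^ (-s)) := by
  have hb : (0 : ℝ) < b := Nat.cast_pos.mpr (NeZero.pos b)
  have hblock (w : ℕ) (r : Fin b) :
      max (b : ℝ) ((w * b + r : ℕ) : ℝ) ^ (-s) ≤ (b : ℝ) ^ (-s) * max 1 (w : ℝ) ^ (-s) := by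
    rw [← Real.mul_rpow hb.le (by positivity), mul_max_of_nonneg _ _ hb.le, mul_one]
    refine Real.rpow_le_rpow_of_nonpos (by positivity) (max_le_max le_rfl ?_) (by linarith)
    push_cast
    exact le_add_of_le_of_nonneg (mul_comm _ _).le (Nat.cast_nonneg _)
  calc ∑' k : ℕ, ENNReal.ofReal (max (b : ℝ) k ^ (-s))
      = ∑' w : ℕ, ∑' r : Fin b, ENNReal.ofReal (max (b : ℝ) ((w * b + r : ℕ) : ℝ) ^ (-s)) := by
        rw [← ENNReal.tsum_prod, ← (Nat.divModEquiv b).symm.tsum_eq]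
        rfl
    _ ≤ ∑' w : ℕ, ∑' _r : Fin b, ENNReal.ofReal ((b : ℝ) ^ (-s) * max 1 (w : ℝ) ^ (-s)) :=
        ENNReal.tsum_le_tsum fun w => ENNReal.tsum_le_tsum fun r =>
          ENNReal.ofReal_le_ofReal (hblock w r)
    _ = ENNReal.ofReal ((b : ℝ) ^ (1 - s)) * ∑' w : ℕ, ENNReal.ofReal (max 1 (w : ℝ) ^ (-s)) := by
        rw [← ENNReal.tsum_mul_left]
        refine tsum_congr fun w => ?_
        rw [tsum_fintype, sum_const, card_univ, Fintype.card_fin, nsmul_eq_mul,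
          ← ENNReal.ofReal_natCast, ← ENNReal.ofReal_mul hb.le, ← ENNReal.ofReal_mul (by positivity),
          sub_eq_add_neg, Real.rpow_add hb, Real.rpow_one, mul_assoc]

lemma exists_tsum_int_max_rpow_neg_le {s : ℝ} (hs : 1 < s) :
    ∃ C > 0, ∀ b : ℕ, 0 < b →
      ∑' d : ℤ, ENNReal.ofReal (max (b : ℝ) |(d : ℝ)| ^ (-s))
        ≤ ENNReal.ofReal (C * (b : ℝ) ^ (1 - s)) := by
  have hsum : Summable fun w : ℕ => max 1 (w : ℝ) ^ (-s) := by
    refine (summable_nat_add_iff 1).mp ?_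
    have hshift (w : ℕ) : max 1 ((w + 1 : ℕ) : ℝ) ^ (-s) = ((w + 1 : ℕ) : ℝ) ^ (-s) := by
      rw [max_eq_right (by exact_mod_cast Nat.succ_pos w)]
    simpa only [hshift] using
      (summable_nat_add_iff 1).mpr (Real.summable_nat_rpow.mpr (by linarith : -s < -1))
  set K := ∑' w : ℕ, max 1 (w : ℝ) ^ (-s)
  have hK : 0 < K := hsum.tsum_pos (fun _ => by positivity) 0 (by positivity)
  refine ⟨2 * K, by positivity, fun b hb => ?_⟩
  have : NeZero b := ⟨hb.ne'⟩
  calc ∑' d : ℤ, ENNReal.ofReal (max (b : ℝ) |(d : ℝ)| ^ (-s))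
      = ∑' d : ℤ, ENNReal.ofReal (max (b : ℝ) (d.natAbs : ℝ) ^ (-s)) := by
        simp only [Nat.cast_natAbs, Int.cast_abs]
    _ ≤ 2 * ∑' k : ℕ, ENNReal.ofReal (max (b : ℝ) k ^ (-s)) := tsum_int_natAbs_le _
    _ ≤ 2 * (ENNReal.ofReal ((b : ℝ) ^ (1 - s)) * ENNReal.ofReal K) := by
        rw [ENNReal.ofReal_tsum_of_nonneg (fun _ => by positivity) hsum]
        gcongr
        exact tsum_nat_max_rpow_neg_le (by linarith) b
    _ = ENNReal.ofReal (2 * K * (b : ℝ) ^ (1 - s)) := by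
        rw [← ENNReal.ofReal_mul (by positivity), ← ENNReal.ofReal_ofNat 2,
          ← ENNReal.ofReal_mul (by positivity)]
        ring_nf

theorem exists_tsum_fracMax_indicator_dcube_rpow_le {n : ℕ} {δ t : ℝ} (hδ0 : 0 ≤ δ)
    (hδn : δ ≤ n) (ht : 1 < (1 - δ / n) * t) :
    ∃ C > 0, ∀ (k0 : Fin n → ℤ) (m : ℕ),
      ∑' j, fracMax δ (fun i => if i ∈ dcube k0 m then (1 : ℝ) else 0) j ^ t
        ≤ ENNReal.ofReal (C * (#(dcube k0 m) : ℝ) ^ (1 + δ / n * t)) := by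
  set γ := δ / n
  set s := (1 - γ) * t with hs
  have ht0 : 0 < t :=
    pos_of_mul_pos_right (one_pos.trans ht) (sub_nonneg.mpr (div_le_one_of_le₀ hδn n.cast_nonneg))
  obtain ⟨C, hC, hCb⟩ := exists_tsum_int_max_rpow_neg_le ht
  refine ⟨C ^ n, by positivity, fun k0 m => ?_⟩
  set b : ℝ := 2 * m + 1
  have hb : 0 < b := by positivity
  set F : ℤ → ℝ≥0∞ := fun d => ENNReal.ofReal (max b |(d : ℝ)| ^ (-s))
  have hterm (j : Fin n → ℤ) :
      fracMax δ (fun i => if i ∈ dcube k0 m then (1 : ℝ) else 0) j ^ t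
        ≤ ∏ l, ENNReal.ofReal (b ^ t) * F (j l - k0 l) := by
    refine (ENNReal.rpow_le_rpow (fracMax_indicator_dcube_le hδ0 hδn k0 m j) ht0.le).trans_eq ?_
    rw [ENNReal.ofReal_prod_of_nonneg (fun l _ => by positivity),
      ← ENNReal.prod_rpow_of_nonneg ht0.le]
    refine prod_congr rfl fun l _ => ?_
    rw [ENNReal.ofReal_rpow_of_nonneg (by positivity) ht0.le, ← ENNReal.ofReal_mul (by positivity),
      Real.mul_rpow hb.le (by positivity), ← Real.rpow_mul (by positivity)]
    congr 3
    ring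
  calc ∑' j, fracMax δ (fun i => if i ∈ dcube k0 m then (1 : ℝ) else 0) j ^ t
      ≤ ∑' j : Fin n → ℤ, ∏ l, ENNReal.ofReal (b ^ t) * F (j l - k0 l) :=
        ENNReal.tsum_le_tsum hterm
    _ ≤ ∏ l, ∑' d : ℤ, ENNReal.ofReal (b ^ t) * F (d - k0 l) := tsum_pi_prod_le_prod_tsum _
    _ = ∏ _l : Fin n, ENNReal.ofReal (b ^ t) * ∑' d : ℤ, F d := by
        refine prod_congr rfl fun l _ => ?_
        rw [ENNReal.tsum_mul_left]
        exact congrArg _ ((Equiv.subRight (k0 l)).tsum_eq F)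
    _ ≤ ∏ _l : Fin n, ENNReal.ofReal (b ^ t) * ENNReal.ofReal (C * b ^ (1 - s)) := by
        gcongr
        have := hCb (2 * m + 1) (by omega)
        push_cast at this
        exact this
    _ = ENNReal.ofReal (C ^ n * (#(dcube k0 m) : ℝ) ^ (1 + γ * t)) := by
        rw [Fin.prod_const, ← ENNReal.ofReal_mul (by positivity), ← ENNReal.ofReal_pow (by positivity),
          card_dcube]
        congr 1
        push_cast
        rw [← Real.rpow_pow_comm hb.le, ← mul_pow, mul_left_comm, ← Real.rpow_add hb, hs]
        ring_nf

lemma sobolev_exponent_relations {n N : ℕ} {α p q : ℝ} (hα : 0 < α) (hαn : α < n) (hp : 0 < p)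
    (hp1 : p ≤ 1) (hq : 1 / q = 1 / p - α / n) (hN : N = ⌊(n : ℝ) * (1 / p - 1)⌋₊ + 1) :
    0 < q ∧ q / p = 1 + α / (n + N) * (q * (n + N) / n) ∧ q / p < q * (n + N) / n := by
  have hn : (0 : ℝ) < n := hα.trans hαn
  have hq0 : 0 < q := by
    refine one_div_pos.mp (hq ▸ ?_)
    linarith [one_le_one_div hp hp1, (div_lt_one hn).mpr hαn]
  have hNlt : (n : ℝ) * (1 / p - 1) < N := by
    rw [hN]; push_cast; exact Nat.lt_floor_add_one _
  refine ⟨hq0, ?_, ?_⟩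
  · field_simp at hq ⊢
    linarith
  · rw [div_lt_div_iff₀ hp hn]
    field_simp at hNlt
    nlinarith

lemma inv_one_div_add_eq_div {T γ A : ℝ} (hT : 0 < T) (hA : A = 1 + γ * T) :
    (1 / T + γ)⁻¹ = T / A := by
  rw [hA]
  field_simp

/-- with `q̃ = q(n+N)/n` and `1/p̃ = 1/q̃ + α/(n+N)`, one has `p̃ > 1`,
`q̃ > 1`, `p̃/q̃ = p/q`, and `∑_j [M_{αn/(n+N)}(χ_Q)(j)]^{q̃} ≤ C (#Q)^{q/p}` for every
discrete cube `Q`. -/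
theorem stmt17 (n : ℕ) (α p q : ℝ) (hα : 0 < α) (hαn : α < n)
    (hp : 0 < p) (hp1 : p ≤ 1) (hq : 1 / q = 1 / p - α / n)
    (N : ℕ) (hN : N = ⌊(n : ℝ) * (1 / p - 1)⌋₊ + 1) :
    (1 : ℝ) < q * (n + N) / n ∧
    (1 : ℝ) < (1 / (q * (n + N) / n) + α / (n + N))⁻¹ ∧
    (1 / (q * (n + N) / n) + α / (n + N))⁻¹ / (q * (n + N) / n) = p / q ∧
    ∃ C > (0 : ℝ), ∀ (k0 : Fin n → ℤ) (m : ℕ),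
      (∑' j : Fin n → ℤ,
          (fracMax (α * n / (n + N))
              (fun i => if i ∈ dcube k0 m then (1 : ℝ) else 0) j) ^ (q * (n + N) / n))
        ≤ ENNReal.ofReal (C * ((dcube k0 m).card : ℝ) ^ (q / p)) := by
  obtain ⟨hq0, hqp, hlt⟩ := sobolev_exponent_relations hα hαn hp hp1 hq hN
  have hn : (0 : ℝ) < n := hα.trans hαn
  set T := q * (n + N) / n
  set γ := α / (n + N)
  have hT : 0 < T := by positivity
  have hγT : 0 ≤ γ * T := by positivity
  have hptilde := inv_one_div_add_eq_div hT hqp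
  have hδ : α * n / (n + N) / n = γ := by rw [div_right_comm, mul_div_cancel_right₀ _ hn.ne']
  refine ⟨by linarith, ?_, ?_, ?_⟩
  · rw [hptilde, one_lt_div (by positivity)]
    exact hlt
  · rw [hptilde, div_right_comm, div_self hT.ne', one_div_div]
  · obtain ⟨C, hC, hbound⟩ := exists_tsum_fracMax_indicator_dcube_rpow_le (δ := α * n / (n + N))
      (t := T) (by positivity) (by rw [div_le_iff₀ (by positivity)]; nlinarith)
      (by rw [hδ]; linarith)
    refine ⟨C, hC, fun k0 m => (hbound k0 m).trans_eq ?_⟩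
    rw [hδ, ← hqp]
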